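/- arXiv:1603.09743 — 4 statements merged into one kernel-verified Lean document; each statement's English description precedes it below -/
import Mathlib

section
/- Let (R, m) be a Noetherian local ring with coefficient field k, let E be an R-injective hull of the residue field k, and fix a k-linear projection σ: E → k of E onto its socle (0 :_E m) ≅ k. For every finitely generated R-module M, the map Φ_M: Hom_R(M, E) → Hom_{cont,k}(M, k) given by post-composition with σ (Φ_M(φ) = σ ∘ φ) is an isomorphism of R-modules, functorial in M. In particular, if M has finite length, Hom_R(M,E) ≅ Hom_k(M,k). -/
/-!
Every element of `E` is killed by a power of `m`: for `a ∈ m` and a Noetherian submodule `C`,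
multiplication by `a ^ n` eventually has disjoint kernel and image on `C`, while essentiality of
`k·e` puts a nonzero `a`-torsion element into any nonzero image. Since every nonzero `y ∈ E` has a
nonzero multiple in the socle, where `σ` is injective, `Φ_M` is injective. For surjectivity onto
functionals `g` killing `m^t M`, induct on `t`: lift `g` on `mM`, extend the lift to `M` by
injectivity of `E`, and add `x ↦ δ x • e` for the defect `δ`, which kills `mM`; this correction is
`R`-linear because `R` acts on `M/mM` through the coefficient field. A module of finite length is
killed by some `m^t` by Nakayama's lemma.
-/

open IsLocalRing Submodule

universe u

section Essential

variable {R E : Type*} [CommRing R] [AddCommGroup E] [Module R E] {I : Ideal R} {e : E}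

theorem exists_smul_ne_zero_forall_smul_eq_zero (hIe : ∀ a ∈ I, a • e = 0)
    (hess : ∀ N : Submodule R E, N ≠ ⊥ → N ⊓ span R {e} ≠ ⊥) {y : E} (hy : y ≠ 0) :
    ∃ r : R, r • y ≠ 0 ∧ ∀ a ∈ I, a • r • y = 0 := by
  obtain ⟨z, ⟨hzy, hze⟩, hz0⟩ := exists_mem_ne_zero_of_ne_bot
    (hess _ (mt span_singleton_eq_bot.mp hy))
  obtain ⟨r, rfl⟩ := mem_span_singleton.mp hzy
  obtain ⟨s, hs⟩ := mem_span_singleton.mp hze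
  exact ⟨r, hz0, fun a ha => by rw [← hs, smul_comm, hIe a ha, smul_zero]⟩

theorem le_radical_annihilator_of_essential (hIe : ∀ a ∈ I, a • e = 0)
    (hess : ∀ N : Submodule R E, N ≠ ⊥ → N ⊓ span R {e} ≠ ⊥)
    (C : Submodule R E) [IsNoetherian R C] : I ≤ C.annihilator.radical := by
  intro a ha
  let f : Module.End R C := a • 1
  have hf (n : ℕ) (x : C) : (f ^ n) x = a ^ n • x := by simp [f, smul_pow]
  obtain ⟨n, hn1, hn⟩ :=
    ((Filter.eventually_ge_atTop 1).and f.eventually_disjoint_ker_pow_range_pow).exists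
  refine ⟨n, mem_annihilator.mpr fun y hy => ?_⟩
  by_contra hy0
  -- a nonzero multiple of `a ^ n • y` is killed by `a`, hence lies in `ker (f ^ n) ⊓ range (f ^ n)`
  obtain ⟨r, hr0, hrI⟩ := exists_smul_ne_zero_forall_smul_eq_zero hIe hess hy0
  let w : C := (f ^ n) (r • ⟨y, hy⟩)
  have hw : (w : E) = r • a ^ n • y := by simpa [w, hf] using smul_comm _ _ _
  have hker : w ∈ LinearMap.ker (f ^ n) := by
    have haw : a • w = 0 := by rw [← ZeroMemClass.coe_eq_zero, coe_smul, hw, hrI a ha]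
    rw [LinearMap.mem_ker, hf, ← pow_sub_one_mul (by omega), mul_smul, haw, smul_zero]
  exact hr0 (by rw [← hw, disjoint_def.mp hn w hker ⟨_, rfl⟩, ZeroMemClass.coe_zero])

theorem exists_pow_smul_top_le_ker [IsNoetherianRing R] (hIe : ∀ a ∈ I, a • e = 0)
    (hess : ∀ N : Submodule R E, N ≠ ⊥ → N ⊓ span R {e} ≠ ⊥) (hI : I.FG)
    {M : Type*} [AddCommGroup M] [Module R M] [Module.Finite R M] (φ : M →ₗ[R] E) :
    ∃ t : ℕ, I ^ t • ⊤ ≤ LinearMap.ker φ := by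
  obtain ⟨t, ht⟩ := Ideal.exists_pow_le_of_le_radical_of_fg
    (le_radical_annihilator_of_essential hIe hess (LinearMap.range φ)) hI
  refine ⟨t, ?_⟩
  rw [LinearMap.ker, ← Submodule.map_le_iff_le_comap, map_smul'', Submodule.map_top]
  exact smul_le.mpr fun r hr x hx => mem_annihilator.mp (ht hr) x hx

theorem eq_zero_of_forall_apply_smul_eq_zero {k : Type*} [Field k] [Module k E] {σ : E →ₗ[k] k}
    (hIe : ∀ a ∈ I, a • e = 0) (hess : ∀ N : Submodule R E, N ≠ ⊥ → N ⊓ span R {e} ≠ ⊥)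
    (hσsoc : ∀ x : E, (∀ a ∈ I, a • x = 0) → σ x = 0 → x = 0)
    {y : E} (hy : ∀ r : R, σ (r • y) = 0) : y = 0 := by
  by_contra hy0
  obtain ⟨r, hr0, hrI⟩ := exists_smul_ne_zero_forall_smul_eq_zero hIe hess hy0
  exact hr0 (hσsoc _ hrI (hy r))

end Essential

section CoefficientField

variable {R : Type*} [CommRing R] [IsLocalRing R] {k : Type*} [Field k] [Algebra k R]

theorem exists_sub_algebraMap_mem_maximalIdeal
    (hcoef : Function.Surjective ((residue R).comp (algebraMap k R))) (r : R) :
    ∃ c : k, r - algebraMap k R c ∈ maximalIdeal R := by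
  obtain ⟨c, hc⟩ := hcoef (residue R r)
  exact ⟨c, Ideal.Quotient.eq.mp hc.symm⟩

variable {E : Type u} [AddCommGroup E] [Module R E] [Module k E] [IsScalarTower k R E]
  {e : E} {σ : E →ₗ[k] k}

theorem exists_lift_of_maximalIdeal_smul_top_le_ker
    (hcoef : Function.Surjective ((residue R).comp (algebraMap k R)))
    (he : ∀ a ∈ maximalIdeal R, a • e = 0) (hσe : σ e = 1)
    {M : Type*} [AddCommGroup M] [Module R M] [Module k M] [IsScalarTower k R M]
    (g : M →ₗ[k] k) (hg : ∀ x ∈ (maximalIdeal R • ⊤ : Submodule R M), g x = 0) :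
    ∃ φ : M →ₗ[R] E, ∀ x : M, σ (φ x) = g x := by
  have hsmul (r : R) (x : M) : g (r • x) • e = r • (g x • e) := by
    obtain ⟨c, hc⟩ := exists_sub_algebraMap_mem_maximalIdeal hcoef r
    have hgr : g (r • x) = c * g x := by
      rw [← sub_add_cancel r (algebraMap k R c), add_smul, map_add,
        hg _ (smul_mem_smul hc trivial), algebraMap_smul, map_smul, smul_eq_mul, zero_add]
    have her : r • e = c • e := by
      rw [← sub_add_cancel r (algebraMap k R c), add_smul, he _ hc, algebraMap_smul, zero_add]
    rw [hgr, smul_comm r, her, smul_smul, mul_comm]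
  let φ : M →ₗ[R] E :=
    { toFun x := g x • e
      map_add' x y := by rw [map_add, add_smul]
      map_smul' := hsmul }
  exact ⟨φ, fun x => show σ (g x • e) = g x by rw [map_smul, hσe, smul_eq_mul, mul_one]⟩

theorem exists_lift_of_pow_smul_top_le_ker
    (hcoef : Function.Surjective ((residue R).comp (algebraMap k R)))
    (hEinj : Module.Injective R E) (he : ∀ a ∈ maximalIdeal R, a • e = 0) (hσe : σ e = 1)
    (t : ℕ) {M : Type u} [AddCommGroup M] [Module R M] [Module k M] [IsScalarTower k R M]
    (g : M →ₗ[k] k) (hg : ∀ x ∈ (maximalIdeal R ^ t • ⊤ : Submodule R M), g x = 0) :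
    ∃ φ : M →ₗ[R] E, ∀ x : M, σ (φ x) = g x := by
  induction t generalizing M with
  | zero => exact ⟨0, fun x => by rw [LinearMap.zero_apply, map_zero, hg x (by simp)]⟩
  | succ t ih =>
    let N : Submodule R M := maximalIdeal R • ⊤
    obtain ⟨φN, hφN⟩ := ih (g ∘ₗ N.subtype.restrictScalars k) fun y hy => by
      have := mem_map_of_mem (f := N.subtype) hy
      rw [map_smul'', map_subtype_top, ← Submodule.mul_smul, ← pow_succ] at this
      exact hg _ this
    obtain ⟨φ₀, hφ₀⟩ := hEinj.out N.subtype N.injective_subtype φN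
    obtain ⟨ψ, hψ⟩ := exists_lift_of_maximalIdeal_smul_top_le_ker hcoef he hσe
      (g - σ ∘ₗ φ₀.restrictScalars k) fun x hx =>
        sub_eq_zero.mpr ((hφN ⟨x, hx⟩).symm.trans (congrArg σ (hφ₀ ⟨x, hx⟩)).symm)
    exact ⟨φ₀ + ψ, fun x => by simp [hψ]⟩

end CoefficientField

theorem exists_pow_smul_top_eq_bot {R M : Type*} [CommRing R] [AddCommGroup M] [Module R M]
    [IsArtinian R M] [IsNoetherian R M] {I : Ideal R} (hI : I ≤ Ideal.jacobson ⊥) :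
    ∃ t : ℕ, I ^ t • (⊤ : Submodule R M) = ⊥ := by
  obtain ⟨t, ht⟩ := IsArtinian.monotone_stabilizes
    ⟨fun n => OrderDual.toDual (I ^ n • (⊤ : Submodule R M)),
      fun _ _ h => smul_mono_left (Ideal.pow_le_pow_right h)⟩
  refine ⟨t, eq_bot_of_le_smul_of_le_jacobson_bot I _ (IsNoetherian.noetherian _) ?_ hI⟩
  rw [← Submodule.mul_smul, ← pow_succ']
  exact (congrArg OrderDual.ofDual (ht (t + 1) t.le_succ)).le

theorem stmt8 {R : Type} [CommRing R] [IsNoetherianRing R] [IsLocalRing R]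
    (k : Type) [Field k] [Algebra k R]
    -- k is a coefficient field of R
    (hcoef : Function.Bijective ((IsLocalRing.residue R).comp (algebraMap k R)))
    (E : Type) [AddCommGroup E] [Module R E] [Module k E] [IsScalarTower k R E]
    -- E is an injective hull of the residue field k = R/m :
    (hEinj : Module.Injective R E) (e : E)
    (he : ∀ r : R, r • e = 0 ↔ r ∈ IsLocalRing.maximalIdeal R)
    (hess : ∀ N : Submodule R E, N ≠ ⊥ → N ⊓ Submodule.span R {e} ≠ ⊥)
    -- σ is a k-linear projection of E onto its socle (identified with k via e) :
    (σ : E →ₗ[k] k) (hσe : σ e = 1)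
    (hσsoc : ∀ x : E, (∀ r ∈ IsLocalRing.maximalIdeal R, r • x = 0) → σ x = 0 → x = 0)
    (M : Type) [AddCommGroup M] [Module R M] [Module k M] [IsScalarTower k R M]
    (hM : Module.Finite R M) :
    -- (1) Φ_M(φ) = σ ∘ φ is m-adically continuous (it kills m^t·M for some t)
    (∀ φ : M →ₗ[R] E, ∃ t : ℕ,
        ∀ x ∈ ((IsLocalRing.maximalIdeal R) ^ t • ⊤ : Submodule R M), σ (φ x) = 0) ∧
    -- (2) Φ_M is injective
    (∀ φ ψ : M →ₗ[R] E, (∀ x : M, σ (φ x) = σ (ψ x)) → φ = ψ) ∧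
    -- (3) Φ_M is surjective onto the m-adically continuous k-linear functionals
    (∀ g : M →ₗ[k] k,
        (∃ t : ℕ, ∀ x ∈ ((IsLocalRing.maximalIdeal R) ^ t • ⊤ : Submodule R M), g x = 0) →
        ∃ φ : M →ₗ[R] E, ∀ x : M, σ (φ x) = g x) ∧
    -- (4) Φ_M is R-linear for the action (r·λ)(x) = λ(r·x) on functionals
    (∀ (r : R) (φ : M →ₗ[R] E) (x : M), σ ((r • φ) x) = σ (φ (r • x))) ∧
    -- (5) Φ is functorial in M
    (∀ (M' : Type) [AddCommGroup M'] [Module R M'],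
        ∀ (f : M' →ₗ[R] M) (φ : M →ₗ[R] E) (x : M'), σ ((φ ∘ₗ f) x) = σ (φ (f x))) ∧
    -- (6) special case: if M has finite length, Φ_M surjects onto all of Hom_k(M,k)
    (IsFiniteLength R M →
        ∀ g : M →ₗ[k] k, ∃ φ : M →ₗ[R] E, ∀ x : M, σ (φ x) = g x) := by
  have he₀ : ∀ a ∈ maximalIdeal R, a • e = 0 := fun a ha => (he a).mpr ha
  have hsurj (g : M →ₗ[k] k)
      (hg : ∃ t : ℕ, ∀ x ∈ (maximalIdeal R ^ t • ⊤ : Submodule R M), g x = 0) :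
      ∃ φ : M →ₗ[R] E, ∀ x : M, σ (φ x) = g x :=
    let ⟨t, hgt⟩ := hg
    exists_lift_of_pow_smul_top_le_ker hcoef.2 hEinj he₀ hσe t g hgt
  refine ⟨fun φ => ?_, fun φ ψ h => ?_, hsurj, fun r φ x => ?_, fun _ _ _ _ _ _ => rfl,
    fun hfl g => ?_⟩
  · obtain ⟨t, ht⟩ := exists_pow_smul_top_le_ker he₀ hess (IsNoetherian.noetherian _) φ
    exact ⟨t, fun x hx => by rw [ht hx, map_zero]⟩
  · ext x
    refine sub_eq_zero.mp (eq_zero_of_forall_apply_smul_eq_zero he₀ hess hσsoc fun r => ?_)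
    rw [smul_sub, ← map_smul, ← map_smul, map_sub, h, sub_self]
  · rw [LinearMap.smul_apply, map_smul φ]
  · obtain ⟨_, _⟩ := isFiniteLength_iff_isNoetherian_isArtinian.mp hfl
    obtain ⟨t, ht⟩ := exists_pow_smul_top_eq_bot (M := M) (maximalIdeal_le_jacobson (R := R) ⊥)
    exact hsurj g ⟨t, fun x hx => by rw [ht, mem_bot] at hx; rw [hx, map_zero]⟩
end

section
/- Let (R, m) be a Noetherian local ring with coefficient field k and E an R-injective hull of k. If M is an R-module with support equal to {m} (for instance, if M is Artinian), then Hom_R(M, E) ≅ Hom_k(M, k) as R-modules, where Hom_k(M,k) is the full k-linear dual with R-action (r·λ)(x) = λ(rx). -/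
/-!
An element `z` of `E` is determined by the functional `r ↦ σ (r • z)` on `R`: a nonzero
`R`-multiple of the difference of two such elements would lie in the socle `R ∙ e` (essentiality)
and be killed by `σ`. Hence `Hom_R(M, E) → Hom_k(M, k)` is injective, and for surjectivity it
suffices to represent each functional `r ↦ g (r • x)`, since the representing elements then depend
`R`-linearly on `x`. Such a functional vanishes on an ideal `I ⊇ 𝔪 ^ t`, and we represent it by
Noetherian induction on `I`: choose `s ∉ I` with `𝔪 s ⊆ I`, use injectivity of `E` to find `z₀`
killed by `I` with `s • z₀ = e`, and subtract `g (s) • σ (· • z₀)`; what is left vanishes on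
`I + R s = I + k s`.
-/

open IsLocalRing

universe u

theorem Ideal.exists_mul_mem_of_pow_le {R : Type*} [CommRing R] {P I : Ideal R} {t : ℕ}
    (ht : P ^ t ≤ I) (hI : I ≠ ⊤) : ∃ s ∉ I, ∀ r ∈ P, r * s ∈ I := by
  induction t with
  | zero => exact absurd (top_le_iff.1 (by simpa using ht)) hI
  | succ t ih =>
    by_cases hle : P ^ t ≤ I
    · exact ih hle
    · obtain ⟨s, hs, hsI⟩ := SetLike.not_le_iff_exists.1 hle
      exact ⟨s, hsI, fun r hr => ht (pow_succ' P t ▸ Ideal.mul_mem_mul hr hs)⟩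

theorem Module.Injective.exists_smul_eq_of_mul_mem {R : Type u} [CommRing R] {E : Type u}
    [AddCommGroup E] [Module R E] (hE : Module.Injective R E) {I : Ideal R} {s : R} {e : E}
    (h : ∀ r, r * s ∈ I → r • e = 0) : ∃ z : E, (∀ i ∈ I, i • z = 0) ∧ s • z = e := by
  let f := LinearMap.toSpanSingleton R (R ⧸ I) (Submodule.Quotient.mk s)
  have hker : LinearMap.ker f ≤ LinearMap.ker (LinearMap.toSpanSingleton R E e) := fun r hr =>
    h r <| (Submodule.Quotient.mk_eq_zero I).1 <| by
      rwa [LinearMap.mem_ker, LinearMap.toSpanSingleton_apply, ← Submodule.Quotient.mk_smul] at hr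
  obtain ⟨F, hF⟩ := hE.out _ (LinearMap.ker_eq_bot.1 ((LinearMap.ker f).ker_liftQ_eq_bot' f rfl))
    ((LinearMap.ker f).liftQ _ hker)
  have hFf : ∀ r : R, F (r • Submodule.Quotient.mk s) = r • e := fun r =>
    hF (Submodule.Quotient.mk r)
  refine ⟨F (Submodule.Quotient.mk 1), fun i hi => ?_, ?_⟩
  · rw [← map_smul, ← Submodule.Quotient.mk_smul, smul_eq_mul, mul_one,
      (Submodule.Quotient.mk_eq_zero I).2 hi, map_zero]
  · rw [← map_smul, ← Submodule.Quotient.mk_smul, smul_eq_mul, mul_one, ← one_smul R e, ← hFf,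
      one_smul]

theorem exists_sub_smul_mem_of_mem_sup_span {R : Type*} [CommRing R] [IsLocalRing R]
    {k : Type*} [Field k] [Algebra k R]
    (hcoef : Function.Surjective ((residue R).comp (algebraMap k R)))
    {I : Ideal R} {s : R} (hms : ∀ r ∈ maximalIdeal R, r * s ∈ I) {j : R}
    (hj : j ∈ I ⊔ Submodule.span R {s}) : ∃ a : k, j - a • s ∈ I := by
  obtain ⟨i, hi, _, hrs, rfl⟩ := Submodule.mem_sup.1 hj
  obtain ⟨r, rfl⟩ := Submodule.mem_span_singleton.1 hrs
  obtain ⟨a, ha⟩ := hcoef (residue R r)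
  have hra : r - algebraMap k R a ∈ maximalIdeal R := Ideal.Quotient.eq.1 ha.symm
  refine ⟨a, ?_⟩
  convert I.add_mem hi (hms _ hra) using 1
  rw [smul_eq_mul, Algebra.smul_def]
  ring

section Socle

variable {R : Type*} [CommRing R] [IsLocalRing R] {k : Type*} [Field k]
  {E : Type*} [AddCommGroup E] [Module R E] [Module k E]

theorem eq_of_forall_apply_smul_eq {e : E} (he : ∀ r ∈ maximalIdeal R, r • e = 0)
    (hess : ∀ N : Submodule R E, N ≠ ⊥ → N ⊓ Submodule.span R {e} ≠ ⊥) {σ : E →ₗ[k] k}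
    (hσsoc : ∀ x : E, (∀ r ∈ maximalIdeal R, r • x = 0) → σ x = 0 → x = 0) {y y' : E}
    (h : ∀ r : R, σ (r • y) = σ (r • y')) : y = y' := by
  rw [← sub_eq_zero]
  by_contra hne
  obtain ⟨w, hw, hw0⟩ := (Submodule.ne_bot_iff _).1
    (hess _ (mt Submodule.span_singleton_eq_bot.1 hne))
  obtain ⟨⟨r, rfl⟩, ⟨c, hc⟩⟩ := And.imp Submodule.mem_span_singleton.1
    Submodule.mem_span_singleton.1 (Submodule.mem_inf.1 hw)
  refine hw0 (hσsoc _ (fun r' hr' => ?_) ?_)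
  · rw [← hc, smul_smul, mul_comm, ← smul_smul, he r' hr', smul_zero]
  · rw [smul_sub, map_sub, h, sub_self]

theorem exists_linearMap_apply_eq {e : E} (he : ∀ r ∈ maximalIdeal R, r • e = 0)
    (hess : ∀ N : Submodule R E, N ≠ ⊥ → N ⊓ Submodule.span R {e} ≠ ⊥) {σ : E →ₗ[k] k}
    (hσsoc : ∀ x : E, (∀ r ∈ maximalIdeal R, r • x = 0) → σ x = 0 → x = 0)
    {M : Type*} [AddCommGroup M] [Module R M] [Module k M] (g : M →ₗ[k] k)
    (hg : ∀ x : M, ∃ z : E, ∀ r : R, σ (r • z) = g (r • x)) :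
    ∃ φ : M →ₗ[R] E, ∀ x : M, σ (φ x) = g x := by
  choose z hz using hg
  have hsep : ∀ {y y' : E}, (∀ r : R, σ (r • y) = σ (r • y')) → y = y' :=
    eq_of_forall_apply_smul_eq he hess hσsoc
  have hadd : ∀ x y, z (x + y) = z x + z y := fun x y => hsep fun r => by
    rw [hz, smul_add, map_add, smul_add, map_add, hz, hz]
  have hsmul : ∀ (c : R) x, z (c • x) = c • z x := fun c x => hsep fun r => by
    rw [hz, smul_smul, smul_smul, hz]
  exact ⟨⟨⟨z, hadd⟩, hsmul⟩, fun x => by simpa using hz x 1⟩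

end Socle

theorem exists_forall_apply_smul_eq_of_pow_le {R : Type u} [CommRing R] [IsLocalRing R]
    [IsNoetherianRing R] {k : Type*} [Field k] [Algebra k R] {E : Type u} [AddCommGroup E]
    [Module R E] [Module k E] [IsScalarTower k R E] (hEinj : Module.Injective R E) {e : E}
    (he : ∀ r ∈ maximalIdeal R, r • e = 0) {σ : E →ₗ[k] k} (hσe : σ e = 1)
    (hcoef : Function.Surjective ((residue R).comp (algebraMap k R))) {t : ℕ} (I : Ideal R)
    (hI : maximalIdeal R ^ t ≤ I) (h : R →ₗ[k] k) (hh : ∀ i ∈ I, h i = 0) :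
    ∃ z : E, ∀ r : R, σ (r • z) = h r := by
  induction I using IsNoetherian.induction generalizing h with
  | hgt I IH =>
  by_cases hItop : I = ⊤
  · exact ⟨0, fun r => by rw [smul_zero, map_zero, hh r (hItop ▸ Submodule.mem_top)]⟩
  obtain ⟨s, hsI, hms⟩ := Ideal.exists_mul_mem_of_pow_le hI hItop
  have hcolon : ∀ r, r * s ∈ I → r ∈ maximalIdeal R := fun r hr => by
    by_contra hrm
    obtain ⟨u, rfl⟩ := notMem_maximalIdeal.1 hrm
    exact hsI (by simpa using Ideal.mul_mem_left I (↑u⁻¹ : R) hr)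
  obtain ⟨z₀, hIz₀, hsz₀⟩ :=
    hEinj.exists_smul_eq_of_mul_mem fun r hr => he r (hcolon r hr)
  let h' := h - h s • (σ ∘ₗ (LinearMap.toSpanSingleton R E z₀).restrictScalars k)
  have hh'_apply : ∀ r, h' r = h r - h s * σ (r • z₀) := fun r => rfl
  have hh' : ∀ j ∈ I ⊔ Submodule.span R {s}, h' j = 0 := by
    intro j hj
    obtain ⟨a, ha⟩ := exists_sub_smul_mem_of_mem_sup_span hcoef hms hj
    have hh'I : ∀ i ∈ I, h' i = 0 := fun i hi => by
      rw [hh'_apply, hh i hi, hIz₀ i hi, map_zero, mul_zero, sub_zero]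
    have hh's : h' s = 0 := by rw [hh'_apply, hsz₀, hσe, mul_one, sub_self]
    rw [← sub_add_cancel j (a • s), map_add, map_smul, hh'I _ ha, hh's, smul_zero, add_zero]
  have hIJ : I < I ⊔ Submodule.span R {s} :=
    left_lt_sup.2 fun hle => hsI (hle (Submodule.mem_span_singleton_self s))
  obtain ⟨z', hz'⟩ := IH _ hIJ (hI.trans le_sup_left) h' hh'
  refine ⟨h s • z₀ + z', fun r => ?_⟩
  rw [smul_add, map_add, hz', hh'_apply, smul_comm, map_smul, smul_eq_mul]
  ring

theorem stmt10 {R : Type} [CommRing R] [IsNoetherianRing R] [IsLocalRing R]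
    (k : Type) [Field k] [Algebra k R]
    (hcoef : Function.Bijective ((IsLocalRing.residue R).comp (algebraMap k R)))
    (E : Type) [AddCommGroup E] [Module R E] [Module k E] [IsScalarTower k R E]
    (hEinj : Module.Injective R E) (e : E)
    (he : ∀ r : R, r • e = 0 ↔ r ∈ IsLocalRing.maximalIdeal R)
    (hess : ∀ N : Submodule R E, N ≠ ⊥ → N ⊓ Submodule.span R {e} ≠ ⊥)
    (σ : E →ₗ[k] k) (hσe : σ e = 1)
    (hσsoc : ∀ x : E, (∀ r ∈ IsLocalRing.maximalIdeal R, r • x = 0) → σ x = 0 → x = 0)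
    (M : Type) [AddCommGroup M] [Module R M] [Module k M] [IsScalarTower k R M]
    -- Supp(M) = {m} : every element of M is annihilated by a power of m
    (hsupp : ∀ x : M, ∃ t : ℕ, ∀ r ∈ (IsLocalRing.maximalIdeal R) ^ t, r • x = 0) :
    -- Φ_M : Hom_R(M,E) → Hom_k(M,k) is injective, ...
    (∀ φ ψ : M →ₗ[R] E, (∀ x : M, σ (φ x) = σ (ψ x)) → φ = ψ) ∧
    -- ... surjective onto the full k-linear dual, ...
    (∀ g : M →ₗ[k] k, ∃ φ : M →ₗ[R] E, ∀ x : M, σ (φ x) = g x) ∧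
    -- ... and R-linear for the action (r·λ)(x) = λ(r·x)
    (∀ (r : R) (φ : M →ₗ[R] E) (x : M), σ ((r • φ) x) = σ (φ (r • x))) := by
  have he' : ∀ r ∈ maximalIdeal R, r • e = 0 := fun r => (he r).2
  refine ⟨fun φ ψ h => ?_, fun g => ?_, fun r φ x => ?_⟩
  · ext x
    exact eq_of_forall_apply_smul_eq he' hess hσsoc fun r => by
      rw [← map_smul, ← map_smul, h]
  · refine exists_linearMap_apply_eq he' hess hσsoc g fun x => ?_
    obtain ⟨t, ht⟩ := hsupp x
    exact exists_forall_apply_smul_eq_of_pow_le hEinj he' hσe hcoef.2 (t := t) _ le_rfl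
      (g ∘ₗ (LinearMap.toSpanSingleton R M x).restrictScalars k) fun i hi => by
        simp [ht i hi]
  · rw [LinearMap.smul_apply, ← map_smul]
end

section
/- Let (R, m) be a Noetherian complete local ring with coefficient field k. Then for every j ≥ 0, the R-module D^j(R) of k-linear differential operators on R of order at most j is finitely generated. -/
/-!
STATEMENT 14: Let (R, m) be a Noetherian complete local ring with coefficient field k.
Then for every j ≥ 0, the R-module D^j(R) of k-linear differential operators on R of
order at most j is finitely generated.

Differential operators are encoded recursively (following EGA): operators of order 0 are
multiplications by elements of R, and `δ` has order ≤ j+1 iff `[δ, r]` has order ≤ j for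
all `r : R`.  Finite generation of `D^j(R)` is expressed by exhibiting a finite set of
differential operators of order ≤ j whose `R`-span (for the action of `R` on
`R →ₗ[k] R` by post-multiplication) contains all differential operators of order ≤ j.
-/

/-- Multiplication by `r : R` as a `k`-linear endomorphism of `R`. -/
noncomputable def mulByLinearMap (k : Type*) {R : Type*} [CommRing R] [CommRing k]
    [Algebra k R] (r : R) : R →ₗ[k] R :=
  (LinearMap.lsmul R R r).restrictScalars k

/-- `IsDiffOp k R j δ` : the `k`-linear endomorphism `δ` of `R` is a differential
operator of order at most `j` (recursive commutator definition). -/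
noncomputable def IsDiffOp (k R : Type*) [CommRing R] [CommRing k] [Algebra k R] :
    ℕ → (R →ₗ[k] R) → Prop
  | 0, δ => ∃ r : R, δ = mulByLinearMap k r
  | (j + 1), δ => ∀ r : R,
      IsDiffOp k R j (δ ∘ₗ mulByLinearMap k r - mulByLinearMap k r ∘ₗ δ)

/-!
Evaluation at the finitely many monomials of degree `≤ j` in generators `x₁, …, xₙ` of the
maximal ideal `m` is an `R`-linear map from `D^j(R)` to a finite free `R`-module, so it suffices
to show that it is injective, since `R` is Noetherian. If `δ ∈ D^j(R)` kills these monomials,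
the Leibniz rule `δ(x y) = [δ, x](y) + x δ(y)` and induction on `j` show that it kills every
monomial, hence the `k`-algebra `A` they generate. Since `k` surjects onto `R/m`, `A` is
`m`-adically dense in `R`, while `δ(m^(j+N)) ⊆ m^N`; so `δ(R) ⊆ ⋂ m^N = 0` by Krull's
intersection theorem.
-/

open Pointwise IsLocalRing

section

variable {k R : Type*} [CommRing k] [CommRing R] [Algebra k R]

@[simp]
lemma mulByLinearMap_apply (r x : R) : mulByLinearMap k r x = r * x := rfl

lemma Set.Finite.pow {M : Type*} [Monoid M] {s : Set M} (hs : s.Finite) (n : ℕ) :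
    (s ^ n).Finite := by
  induction n with
  | zero => simp
  | succ n ih => rw [pow_succ]; exact ih.mul hs

theorem exists_mem_adjoin_sub_mem_pow {ι : Type*} [Fintype ι] {I : Ideal R} {x : ι → R}
    (hx : Ideal.span (Set.range x) = I) (hres : ∀ r : R, ∃ c : k, r - algebraMap k R c ∈ I)
    (N : ℕ) (r : R) : ∃ a ∈ Algebra.adjoin k (Set.range x), r - a ∈ I ^ N := by
  induction N generalizing r with
  | zero => exact ⟨0, zero_mem _, by simp⟩
  | succ N ih =>
    obtain ⟨c, hc⟩ := hres r
    rw [← hx] at hc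
    obtain ⟨f, hf⟩ := (Submodule.mem_span_range_iff_exists_fun R).1 hc
    choose a ha hfa using fun i => ih (f i)
    have hxA (i : ι) : x i ∈ Algebra.adjoin k (Set.range x) := Algebra.subset_adjoin ⟨i, rfl⟩
    have hxI (i : ι) : x i ∈ I := hx ▸ Ideal.subset_span ⟨i, rfl⟩
    refine ⟨algebraMap k R c + ∑ i, a i * x i,
      add_mem (Subalgebra.algebraMap_mem _ c) (sum_mem fun i _ => mul_mem (ha i) (hxA i)), ?_⟩
    have hsplit : r - (algebraMap k R c + ∑ i, a i * x i) = ∑ i, (f i - a i) * x i := by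
      rw [← sub_sub, ← hf]
      simp only [smul_eq_mul, sub_mul, Finset.sum_sub_distrib]
    rw [hsplit, pow_succ]
    exact sum_mem fun i _ => Ideal.mul_mem_mul (hfa i) (hxI i)

namespace IsDiffOp

lemma commutator_apply (δ : R →ₗ[k] R) (r x : R) :
    (δ ∘ₗ mulByLinearMap k r - mulByLinearMap k r ∘ₗ δ) x = δ (r * x) - r * δ x := rfl

theorem zero (j : ℕ) : IsDiffOp k R j 0 := by
  induction j with
  | zero => exact ⟨0, by ext; simp⟩
  | succ j ih => intro r; simpa using ih

theorem add {j : ℕ} {δ ε : R →ₗ[k] R} (hδ : IsDiffOp k R j δ) (hε : IsDiffOp k R j ε) :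
    IsDiffOp k R j (δ + ε) := by
  induction j generalizing δ ε with
  | zero =>
    obtain ⟨r, rfl⟩ := hδ
    obtain ⟨s, rfl⟩ := hε
    exact ⟨r + s, by ext; simp [add_mul]⟩
  | succ j ih =>
    intro r
    convert ih (hδ r) (hε r) using 1
    ext; simp only [commutator_apply, LinearMap.add_apply]; ring

theorem smul {j : ℕ} (c : R) {δ : R →ₗ[k] R} (hδ : IsDiffOp k R j δ) :
    IsDiffOp k R j (c • δ) := by
  induction j generalizing δ with
  | zero =>
    obtain ⟨r, rfl⟩ := hδ
    exact ⟨c * r, by ext; simp [mul_assoc]⟩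
  | succ j ih =>
    intro r
    convert ih (hδ r) using 1
    ext; simp only [commutator_apply, LinearMap.smul_apply, smul_eq_mul]; ring

theorem map_mem_pow {j : ℕ} {δ : R →ₗ[k] R} (hδ : IsDiffOp k R j δ) (I : Ideal R) {N : ℕ}
    {a : R} (ha : a ∈ I ^ (j + N)) : δ a ∈ I ^ N := by
  induction j generalizing δ N a with
  | zero =>
    obtain ⟨r, rfl⟩ := hδ
    exact Ideal.mul_mem_left _ r (by simpa using ha)
  | succ j ih =>
    induction N generalizing a with
    | zero => simp
    | succ N ihN =>
      rw [show j + 1 + (N + 1) = j + 1 + N + 1 by omega, pow_succ] at ha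
      refine Submodule.mul_induction_on ha (fun b hb c hc => ?_)
        fun _ _ h₁ h₂ => (map_add δ _ _).symm ▸ add_mem h₁ h₂
      have hleibniz : δ (b * c) = δ b * c + (δ ∘ₗ mulByLinearMap k c -
          mulByLinearMap k c ∘ₗ δ) b := by
        rw [mul_comm b c, commutator_apply]; ring
      rw [hleibniz, pow_succ]
      exact add_mem (Ideal.mul_mem_mul (ihN hb) hc)
        (ih (hδ c) (by rwa [show j + (N + 1) = j + 1 + N by omega]))

theorem apply_eq_zero_of_mem_closure {j : ℕ} {δ : R →ₗ[k] R} {s : Set R}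
    (hδ : IsDiffOp k R j δ) (h : ∀ a ∈ (insert 1 s) ^ j, δ a = 0) :
    ∀ a ∈ Submonoid.closure s, δ a = 0 := by
  induction j generalizing δ with
  | zero =>
    obtain ⟨r, rfl⟩ := hδ
    have hr : r = 0 := by simpa using h 1 (by simp)
    simp [hr]
  | succ j ih =>
    have hmul {a b : R} (hb : b ∈ insert 1 s) (ha : a ∈ (insert 1 s) ^ j) :
        b * a ∈ (insert 1 s) ^ (j + 1) := by
      rw [pow_succ']; exact Set.mul_mem_mul hb ha
    intro a ha
    induction ha using Submonoid.closure_induction_left with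
    | one => exact h 1 (Set.one_mem_pow (Set.mem_insert 1 s))
    | mul_left x hx y hy hδy =>
      have hcomm := ih (hδ x) (fun b hb => by
        rw [commutator_apply, h b (one_mul b ▸ hmul (Set.mem_insert 1 s) hb), mul_zero,
          sub_zero]
        exact h _ (hmul (Set.mem_insert_of_mem 1 hx) hb)) y hy
      rw [commutator_apply, hδy, mul_zero, sub_zero] at hcomm
      exact hcomm

theorem apply_eq_zero_of_mem_adjoin {j : ℕ} {δ : R →ₗ[k] R} {s : Set R}
    (hδ : IsDiffOp k R j δ) (h : ∀ a ∈ (insert 1 s) ^ j, δ a = 0) :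
    ∀ a ∈ Algebra.adjoin k s, δ a = 0 := by
  have hle : Submodule.span k (Submonoid.closure s : Set R) ≤ LinearMap.ker δ :=
    Submodule.span_le.2 (hδ.apply_eq_zero_of_mem_closure h)
  intro a ha
  rw [← Subalgebra.mem_toSubmodule, Algebra.adjoin_eq_span] at ha
  exact hle ha

theorem eq_zero_of_apply_monomials_eq_zero [IsNoetherianRing R] [IsLocalRing R] {ι : Type*}
    [Fintype ι] {x : ι → R} (hx : Ideal.span (Set.range x) = maximalIdeal R)
    (hres : ∀ r : R, ∃ c : k, r - algebraMap k R c ∈ maximalIdeal R)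
    {j : ℕ} {δ : R →ₗ[k] R} (hδ : IsDiffOp k R j δ)
    (h : ∀ a ∈ (insert 1 (Set.range x)) ^ j, δ a = 0) : δ = 0 := by
  ext r
  have hkrull :=
    Ideal.iInf_pow_eq_bot_of_isLocalRing (maximalIdeal R) (maximalIdeal.isMaximal R).ne_top
  rw [LinearMap.zero_apply, ← Ideal.mem_bot, ← hkrull, Submodule.mem_iInf]
  intro N
  obtain ⟨a, ha, hra⟩ := exists_mem_adjoin_sub_mem_pow hx hres (j + N) r
  have hδr : δ r = δ (r - a) := by rw [map_sub, hδ.apply_eq_zero_of_mem_adjoin h a ha, sub_zero]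
  exact hδr ▸ hδ.map_mem_pow _ hra

end IsDiffOp

variable (k R) in
/-- The `R`-module `D^j(R)`. -/
def diffOps (j : ℕ) : Submodule R (R →ₗ[k] R) where
  carrier := {δ | IsDiffOp k R j δ}
  add_mem' := IsDiffOp.add
  zero_mem' := IsDiffOp.zero j
  smul_mem' := IsDiffOp.smul

theorem diffOps_fg [IsNoetherianRing R] [IsLocalRing R]
    (hres : ∀ r : R, ∃ c : k, r - algebraMap k R c ∈ maximalIdeal R) (j : ℕ) :
    (diffOps k R j).FG := by
  obtain ⟨n, x, hx⟩ :=
    Submodule.fg_iff_exists_fin_generating_family.1 (IsNoetherian.noetherian (maximalIdeal R))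
  set T := (insert 1 (Set.range x)) ^ j
  have : Finite T := ((Set.finite_range x).insert 1).pow j |>.to_subtype
  let eval : ↥(diffOps k R j) →ₗ[R] (T → R) :=
    LinearMap.pi (fun t : T => LinearMap.applyₗ' R t.1) ∘ₗ (diffOps k R j).subtype
  have heval : Function.Injective eval := by
    intro δ ε hδε
    refine Subtype.ext <| sub_eq_zero.1 <|
      IsDiffOp.eq_zero_of_apply_monomials_eq_zero hx hres (sub_mem δ.2 ε.2) ?_
    intro a ha
    rw [LinearMap.sub_apply, sub_eq_zero]
    exact congrFun hδε ⟨a, ha⟩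
  have : IsNoetherian R ↥(diffOps k R j) := isNoetherian_of_injective eval heval
  exact (Submodule.fg_top _).1 (IsNoetherian.noetherian ⊤)

end

theorem stmt14_general {R : Type*} [CommRing R] [IsNoetherianRing R] [IsLocalRing R]
    (k : Type*) [Field k] [Algebra k R]
    -- k is a coefficient field: it maps isomorphically onto the residue field
    (hcoef : Function.Bijective ((IsLocalRing.residue R).comp (algebraMap k R)))
    (j : ℕ) :
    ∃ S : Finset (R →ₗ[k] R),
      (∀ δ ∈ S, IsDiffOp k R j δ) ∧
      ∀ δ : R →ₗ[k] R, IsDiffOp k R j δ →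
        δ ∈ Submodule.span R (S : Set (R →ₗ[k] R)) := by
  have hres (r : R) : ∃ c : k, r - algebraMap k R c ∈ maximalIdeal R := by
    obtain ⟨c, hc⟩ := hcoef.2 (residue R r)
    refine ⟨c, (residue_eq_zero_iff _).1 ?_⟩
    rw [map_sub, ← RingHom.comp_apply, hc, sub_self]
  obtain ⟨S, hS⟩ := diffOps_fg hres j
  refine ⟨S, fun δ hδ => ?_, fun δ hδ => ?_⟩
  · exact show δ ∈ diffOps k R j from hS ▸ Submodule.subset_span hδ
  · exact hS.symm ▸ (show δ ∈ diffOps k R j from hδ)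

theorem stmt14 {R : Type*} [CommRing R] [IsNoetherianRing R] [IsLocalRing R]
    [IsAdicComplete (IsLocalRing.maximalIdeal R) R]
    (k : Type*) [Field k] [Algebra k R]
    -- k is a coefficient field: it maps isomorphically onto the residue field
    (hcoef : Function.Bijective ((IsLocalRing.residue R).comp (algebraMap k R)))
    (j : ℕ) :
    ∃ S : Finset (R →ₗ[k] R),
      (∀ δ ∈ S, IsDiffOp k R j δ) ∧
      ∀ δ : R →ₗ[k] R, IsDiffOp k R j δ →
        δ ∈ Submodule.span R (S : Set (R →ₗ[k] R)) :=
  stmt14_general k hcoef j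
end

section
/- Let k be a field and {U_i}_{i∈ℕ} an inverse system of k-vector spaces with transition maps f_{ji}: U_j → U_i for i ≤ j. Suppose that {U_i} satisfies the Mittag-Leffler condition and that the inverse limit lim_i (U_i^∨∨) of the double-dual inverse system (with transition maps f_{ji}^∨∨) is a finite-dimensional k-vector space. Then lim_i U_i ≅ lim_i (U_i^∨∨) as k-vector spaces. -/
/-!
STATEMENT 19: Let k be a field and {U_i}_{i∈ℕ} an inverse system of k-vector spaces with
transition maps f_{ji}: U_j → U_i for i ≤ j.  Suppose that {U_i} satisfies the
Mittag-Leffler condition and that the inverse limit lim_i (U_i^∨∨) of the double-dual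
inverse system (with transition maps f_{ji}^∨∨) is a finite-dimensional k-vector space.
Then lim_i U_i ≅ lim_i (U_i^∨∨) as k-vector spaces.
-/

noncomputable section

/-- The inverse limit of an inverse system of `k`-vector spaces indexed by `ℕ`,
realized as the submodule of compatible families in the product. -/
def invLimit (k : Type) [Field k] (U : ℕ → Type) [∀ i, AddCommGroup (U i)]
    [∀ i, Module k (U i)] (f : ∀ i j, i ≤ j → (U j →ₗ[k] U i)) :
    Submodule k (∀ i, U i) where
  carrier := {x | ∀ (i j : ℕ) (h : i ≤ j), f i j h (x j) = x i}
  add_mem' := by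
    intro a b ha hb i j h
    simp [ha i j h, hb i j h]
  zero_mem' := by intro i j h; simp
  smul_mem' := by
    intro c a ha i j h
    simp [ha i j h]

/-- The Mittag-Leffler condition for an inverse system indexed by `ℕ`: for each `ℓ`
the descending chain of images of the transition maps in `U ℓ` is stationary. -/
def MittagLeffler (k : Type) [Field k] (U : ℕ → Type) [∀ i, AddCommGroup (U i)]
    [∀ i, Module k (U i)] (f : ∀ i j, i ≤ j → (U j →ₗ[k] U i)) : Prop :=
  ∀ ℓ : ℕ, ∃ s : ℕ, ∀ t : ℕ, s ≤ t →
    LinearMap.range (f ℓ (ℓ + t) (Nat.le_add_right ℓ t)) =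
    LinearMap.range (f ℓ (ℓ + s) (Nat.le_add_right ℓ s))

/-!
The evaluation maps `U i → U i^∨∨` induce an injective map of inverse limits. The range of
`(f i j)^∨∨` is the double annihilator of the range of `f i j`, so the double-dual system is again
Mittag-Leffler, and for a Mittag-Leffler system the image of the limit in its `i`-th term is the
stable image, because the stable images surject onto each other. Hence the image of
`lim U i^∨∨` in `U i^∨∨` is `R^⊥⊥` for a subspace `R` of `U i`; it is finite-dimensional because
the limit is. Then `R`, which embeds into `R^⊥⊥`, is finite-dimensional too, so `R^⊥⊥` consists of
evaluations of elements of `R`, and every element of `lim U i^∨∨` comes from `lim U i`.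
-/

structure IsInverseSystem (k : Type) [Field k] (U : ℕ → Type) [∀ i, AddCommGroup (U i)]
    [∀ i, Module k (U i)] (f : ∀ i j, i ≤ j → (U j →ₗ[k] U i)) : Prop where
  map_id : ∀ i, f i i le_rfl = LinearMap.id
  map_comp : ∀ (i j l : ℕ) (hij : i ≤ j) (hjl : j ≤ l),
    f i j hij ∘ₗ f j l hjl = f i l (hij.trans hjl)

theorem LinearMap.range_dualMap_dualMap {k A B : Type*} [Field k] [AddCommGroup A] [Module k A]
    [AddCommGroup B] [Module k B] (g : A →ₗ[k] B) :
    range g.dualMap.dualMap = (range g).dualAnnihilator.dualAnnihilator := by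
  rw [range_dualMap_eq_dualAnnihilator_ker, ker_dualMap_eq_dualAnnihilator_range]

theorem Subspace.dualAnnihilator_dualAnnihilator_eq_map_of_finiteDimensional {k V : Type*}
    [Field k] [AddCommGroup V] [Module k V] (R : Subspace k V)
    [FiniteDimensional k R.dualAnnihilator.dualAnnihilator] :
    R.dualAnnihilator.dualAnnihilator = R.map (Module.Dual.eval k V) := by
  have : FiniteDimensional k (R.map (Module.Dual.eval k V)) :=
    Submodule.finiteDimensional_of_le (map_le_dualAnnihilator_dualAnnihilator R)
  have : FiniteDimensional k R :=
    .equiv (R.equivMapOfInjective _ (Module.eval_apply_injective k)).symm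
  exact dualAnnihilator_dualAnnihilator_eq_map R

section InverseSystem

variable {k : Type} [Field k] {U : ℕ → Type} [∀ i, AddCommGroup (U i)] [∀ i, Module k (U i)]
  {f : ∀ i j, i ≤ j → (U j →ₗ[k] U i)}

namespace IsInverseSystem

theorem dualMap_dualMap (hf : IsInverseSystem k U f) :
    IsInverseSystem k (fun i => Module.Dual k (Module.Dual k (U i)))
      (fun i j h => (f i j h).dualMap.dualMap) where
  map_id i := by simp only [hf.map_id, LinearMap.dualMap_id]
  map_comp i j l hij hjl := by
    simp only [LinearMap.dualMap_comp_dualMap, hf.map_comp]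

theorem mem_invLimit_of_succ (hf : IsInverseSystem k U f) {x : ∀ i, U i}
    (hx : ∀ n, f n (n + 1) n.le_succ (x (n + 1)) = x n) : x ∈ invLimit k U f := by
  intro i j hij
  induction j, hij using Nat.le_induction with
  | base => rw [hf.map_id]; rfl
  | succ j hij ih =>
    rw [← hf.map_comp i j (j + 1) hij j.le_succ, LinearMap.comp_apply, hx, ih]

/-- The element of the limit is built by lifting `w` step by step above `i` and pushing it down
below `i`. -/
theorem exists_mem_invLimit_apply_eq (hf : IsInverseSystem k U f) {S : ∀ n, Set (U n)}
    (hS : ∀ n, S n ⊆ f n (n + 1) n.le_succ '' S (n + 1)) {i : ℕ} {w : U i} (hw : w ∈ S i) :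
    ∃ x ∈ invLimit k U f, x i = w := by
  have : ∀ n (v : U n), ∃ u, v ∈ S n → u ∈ S (n + 1) ∧ f n (n + 1) n.le_succ u = v := by
    intro n v
    by_cases hv : v ∈ S n
    · obtain ⟨u, hu, rfl⟩ := hS n hv
      exact ⟨u, fun _ => ⟨hu, rfl⟩⟩
    · exact ⟨0, fun h => absurd h hv⟩
  choose g hg using this
  let x : ∀ m, U m := fun m => Nat.rec (motive := fun m => U m) (f 0 i (Nat.zero_le i) w)
    (fun m xm => if h : m + 1 ≤ i then f (m + 1) i h w else g m xm) m
  have x_of_le : ∀ m (h : m ≤ i), x m = f m i h w := by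
    rintro (_ | m) h
    · rfl
    · exact dif_pos h
  have x_succ_of_le : ∀ m, i ≤ m → x (m + 1) = g m (x m) := fun m hm =>
    dif_neg (by omega)
  have x_mem : ∀ m, i ≤ m → x m ∈ S m := by
    intro m hm
    induction m, hm using Nat.le_induction with
    | base => rwa [x_of_le i le_rfl, hf.map_id]
    | succ m hm ih => exact x_succ_of_le m hm ▸ (hg m _ ih).1
  refine ⟨x, hf.mem_invLimit_of_succ fun m => ?_, by rw [x_of_le i le_rfl, hf.map_id]; rfl⟩
  by_cases hm : m + 1 ≤ i
  · rw [x_of_le m (by omega), x_of_le (m + 1) hm, ← LinearMap.comp_apply, hf.map_comp]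
  · rw [x_succ_of_le m (by omega)]
    exact (hg m _ (x_mem m (by omega))).2

end IsInverseSystem

namespace MittagLeffler

theorem dualMap_dualMap (hML : MittagLeffler k U f) :
    MittagLeffler k (fun i => Module.Dual k (Module.Dual k (U i)))
      (fun i j h => (f i j h).dualMap.dualMap) := by
  intro ℓ
  obtain ⟨s, hs⟩ := hML ℓ
  exact ⟨s, fun t ht => by simp only [LinearMap.range_dualMap_dualMap, hs t ht]⟩

theorem map_proj_invLimit (hML : MittagLeffler k U f) (hf : IsInverseSystem k U f) (i : ℕ) :
    ∃ s, (invLimit k U f).map (LinearMap.proj i) =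
      LinearMap.range (f i (i + s) (Nat.le_add_right i s)) := by
  choose s hs using hML
  have range_eq : ∀ n j (h : n + s n ≤ j),
      LinearMap.range (f n j (by omega)) = LinearMap.range (f n (n + s n) (by omega)) := by
    intro n j h
    obtain ⟨t, rfl⟩ := Nat.exists_eq_add_of_le (le_of_add_le_left h)
    exact hs n t (by omega)
  have lift : ∀ n, (LinearMap.range (f n (n + s n) (by omega)) : Set (U n)) ⊆
      f n (n + 1) n.le_succ '' LinearMap.range (f (n + 1) (n + 1 + s (n + 1)) (by omega)) := by
    intro n v hv
    let T := max (n + s n) (n + 1 + s (n + 1))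
    rw [SetLike.mem_coe, ← range_eq n T (le_max_left _ _)] at hv
    obtain ⟨z, rfl⟩ := hv
    refine ⟨f (n + 1) T (by omega) z, ?_, by rw [← LinearMap.comp_apply, hf.map_comp]⟩
    rw [SetLike.mem_coe, ← range_eq (n + 1) T (le_max_right _ _)]
    exact LinearMap.mem_range_self _ z
  refine ⟨s i, le_antisymm ?_ fun v hv => ?_⟩
  · rintro _ ⟨x, hx, rfl⟩
    exact ⟨x (i + s i), hx i (i + s i) _⟩
  · obtain ⟨x, hx, rfl⟩ := hf.exists_mem_invLimit_apply_eq lift hv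
    exact ⟨x, hx, rfl⟩

end MittagLeffler

variable (f)

def invLimitToDoubleDual :
    invLimit k U f →ₗ[k] invLimit k (fun i => Module.Dual k (Module.Dual k (U i)))
      (fun i j h => (f i j h).dualMap.dualMap) :=
  LinearMap.codRestrict _
    ((LinearMap.pi fun i => Module.Dual.eval k (U i) ∘ₗ LinearMap.proj i) ∘ₗ
      (invLimit k U f).subtype)
    fun x i j h => congrArg (Module.Dual.eval k (U i)) (x.2 i j h)

theorem invLimitToDoubleDual_injective : Function.Injective (invLimitToDoubleDual f) :=
  fun _ _ hxy => Subtype.ext <| funext fun i =>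
    Module.eval_apply_injective k (congrFun (congrArg Subtype.val hxy) i)

theorem invLimitToDoubleDual_surjective
    (h : ∀ i, (invLimit k (fun i => Module.Dual k (Module.Dual k (U i)))
      (fun i j h => (f i j h).dualMap.dualMap)).map (LinearMap.proj i) ≤
        LinearMap.range (Module.Dual.eval k (U i))) :
    Function.Surjective (invLimitToDoubleDual f) := by
  intro φ
  choose u hu using fun i => h i ⟨φ.1, φ.2, rfl⟩
  refine ⟨⟨u, fun i j hij => Module.eval_apply_injective k ?_⟩, Subtype.ext (funext hu)⟩
  change (f i j hij).dualMap.dualMap (Module.Dual.eval k (U j) (u j)) = _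
  rw [hu j, hu i]
  exact φ.2 i j hij

end InverseSystem

theorem stmt19 (k : Type) [Field k] (U : ℕ → Type) [∀ i, AddCommGroup (U i)]
    [∀ i, Module k (U i)] (f : ∀ i j, i ≤ j → (U j →ₗ[k] U i))
    -- {U_i} is an inverse system:
    (hid : ∀ i, f i i le_rfl = LinearMap.id)
    (hcomp : ∀ (i j l : ℕ) (hij : i ≤ j) (hjl : j ≤ l),
      (f i j hij) ∘ₗ (f j l hjl) = f i l (hij.trans hjl))
    -- the Mittag-Leffler condition:
    (hML : MittagLeffler k U f)
    -- the inverse limit of the double-dual system is finite-dimensional: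
    (hfd : Module.Finite k
      (invLimit k (fun i => Module.Dual k (Module.Dual k (U i)))
        (fun i j h => ((f i j h).dualMap).dualMap))) :
    Nonempty
      ((invLimit k U f) ≃ₗ[k]
        (invLimit k (fun i => Module.Dual k (Module.Dual k (U i)))
          (fun i j h => ((f i j h).dualMap).dualMap))) := by
  have hf : IsInverseSystem k U f := ⟨hid, hcomp⟩
  refine ⟨.ofBijective (invLimitToDoubleDual f)
    ⟨invLimitToDoubleDual_injective f, invLimitToDoubleDual_surjective f fun i => ?_⟩⟩
  obtain ⟨s, hs⟩ := hML.dualMap_dualMap.map_proj_invLimit hf.dualMap_dualMap i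
  rw [LinearMap.range_dualMap_dualMap] at hs
  generalize LinearMap.range (f i (i + s) (Nat.le_add_right i s)) = R at hs
  have : FiniteDimensional k R.dualAnnihilator.dualAnnihilator := hs ▸ Module.Finite.map _ _
  rw [hs, Subspace.dualAnnihilator_dualAnnihilator_eq_map_of_finiteDimensional]
  exact LinearMap.map_le_range

end
end
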